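/- arXiv:2311.16188 — 4 statements merged into one kernel-verified Lean document; each statement's English description precedes it below -/
import Mathlib

section
/- For any finite simple graph G, foliage-equivalence is an equivalence relation on the vertex set of G: it is reflexive, symmetric, and transitive. -/
variable {V : Type*}

/-- Local complementation `τ_a(G)`: toggle every edge between distinct neighbors of `a`. -/
def lcomp (G : SimpleGraph V) (a : V) : SimpleGraph V where
  Adj x y := (G.Adj x y ∧ ¬(x ≠ y ∧ G.Adj a x ∧ G.Adj a y)) ∨
             ((x ≠ y ∧ G.Adj a x ∧ G.Adj a y) ∧ ¬ G.Adj x y)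
  symm := by
    constructor
    rintro x y (⟨h1, h2⟩ | ⟨⟨hne, hx, hy⟩, h2⟩)
    · exact Or.inl ⟨h1.symm, fun h => h2 ⟨h.1.symm, h.2.2, h.2.1⟩⟩
    · exact Or.inr ⟨⟨hne.symm, hy, hx⟩, fun h => h2 h.symm⟩
  loopless := by
    constructor
    rintro x (⟨h1, _⟩ | ⟨⟨hne, _, _⟩, _⟩)
    · exact (G.ne_of_adj h1) rfl
    · exact hne rfl

/-- `(l, a)` is a leaf-axil pair: `l` has degree 1 and its unique neighbor is `a`. -/
def IsLeafAxil (G : SimpleGraph V) (l a : V) : Prop :=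
  G.Adj l a ∧ ∀ x, G.Adj l x → x = a

/-- `v` and `w` are twins: `N_v \ {w} = N_w \ {v} ≠ ∅`. -/
def IsTwin (G : SimpleGraph V) (v w : V) : Prop :=
  v ≠ w ∧ G.neighborSet v \ {w} = G.neighborSet w \ {v} ∧
    (G.neighborSet v \ {w}).Nonempty

/-- Foliage equivalence `v ∼_F w`. -/
def FoliageEq (G : SimpleGraph V) (v w : V) : Prop :=
  v = w ∨ IsLeafAxil G v w ∨ IsLeafAxil G w v ∨ IsTwin G v w

/-!
Transitivity is a case analysis over the kinds of the two pairs. Two leaves at a common axil are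
twins; a twin of a leaf is a leaf at the same axil; the axil of a leaf has no twin but that leaf;
and twins of twins are twins, because agreeing outside `{v, w}` and outside `{w, u}` forces
`v` and `u` to agree at `w` as well.
-/

variable {G : SimpleGraph V} {v w u a x : V}

theorem IsLeafAxil.adj_iff (h : IsLeafAxil G v a) : G.Adj v x ↔ x = a :=
  ⟨h.2 x, fun hx => hx ▸ h.1⟩

/-- Since `v ∉ N_v` and `w ∉ N_w`, the equation `N_v \ {w} = N_w \ {v}` only constrains the
vertices other than `v` and `w`. -/
theorem isTwin_iff : IsTwin G v w ↔
    v ≠ w ∧ (∀ x, x ≠ v → x ≠ w → (G.Adj v x ↔ G.Adj w x)) ∧ ∃ x, G.Adj v x ∧ x ≠ w := by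
  simp only [IsTwin, Set.ext_iff, Set.mem_sdiff, SimpleGraph.mem_neighborSet,
    Set.mem_singleton_iff, Set.Nonempty]
  refine and_congr_right fun _ => and_congr_left fun _ => ⟨fun h x hv hw => ?_, fun h x => ?_⟩
  · simpa [hv, hw] using h x
  · by_cases hv : x = v
    · simp [hv]
    by_cases hw : x = w
    · simp [hw]
    simp [hv, hw, h x hv hw]

theorem IsTwin.ne (h : IsTwin G v w) : v ≠ w := h.1

theorem IsTwin.adj_iff (h : IsTwin G v w) (hv : x ≠ v) (hw : x ≠ w) :
    G.Adj v x ↔ G.Adj w x :=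
  (isTwin_iff.mp h).2.1 x hv hw

theorem IsTwin.exists_adj (h : IsTwin G v w) : ∃ x, G.Adj v x ∧ x ≠ w :=
  (isTwin_iff.mp h).2.2

theorem IsTwin.symm (h : IsTwin G v w) : IsTwin G w v :=
  ⟨h.1.symm, h.2.1.symm, h.2.1 ▸ h.2.2⟩

theorem IsLeafAxil.eq_or_isTwin (hv : IsLeafAxil G v a) (hu : IsLeafAxil G u a) :
    v = u ∨ IsTwin G v u := by
  refine or_iff_not_imp_left.mpr fun hvu => isTwin_iff.mpr ⟨hvu, fun x _ _ => ?_, a, hv.1, ?_⟩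
  · rw [hv.adj_iff, hu.adj_iff]
  · exact hu.1.ne'

theorem IsTwin.eq_of_isLeafAxil (htw : IsTwin G w u) (hv : IsLeafAxil G v w) : v = u := by
  by_contra hvu
  have hwv : G.Adj w v := hv.1.symm
  have huv : G.Adj u v := (htw.adj_iff hwv.ne' hvu).mp hwv
  exact htw.ne (hv.2 u huv.symm).symm

/-- `v` cannot be adjacent to `w`, whose only neighbour is `a ≠ v`. -/
theorem IsTwin.isLeafAxil (htw : IsTwin G v w) (hw : IsLeafAxil G w a) : IsLeafAxil G v a := by
  obtain ⟨x, hvx, hxw⟩ := htw.exists_adj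
  have hxa : x = a := hw.2 x ((htw.adj_iff hvx.ne' hxw).mp hvx)
  subst hxa
  refine ⟨hvx, fun y hvy => ?_⟩
  by_cases hyw : y = w
  · subst hyw
    exact (G.ne_of_adj hvx (hw.2 v hvy.symm)).elim
  · exact hw.2 y ((htw.adj_iff hvy.ne' hyw).mp hvy)

theorem IsTwin.eq_or_isTwin (hvw : IsTwin G v w) (hwu : IsTwin G w u) :
    v = u ∨ IsTwin G v u := by
  refine or_iff_not_imp_left.mpr fun hvu => ?_
  have hvw_adj : G.Adj v w ↔ G.Adj v u := by
    rw [G.adj_comm, hwu.adj_iff hvw.ne hvu, G.adj_comm]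
  have huw_adj : G.Adj u w ↔ G.Adj v u := by
    rw [G.adj_comm, hvw.adj_iff (Ne.symm hvu) hwu.ne.symm]
  have hcommon : ∀ x, x ≠ v → x ≠ u → (G.Adj v x ↔ G.Adj u x) := by
    intro x hxv hxu
    by_cases hxw : x = w
    · subst hxw
      exact hvw_adj.trans huw_adj.symm
    · exact (hvw.adj_iff hxv hxw).trans (hwu.adj_iff hxw hxu)
  obtain ⟨x, hvx, hxw⟩ := hvw.exists_adj
  by_cases hxu : x = u
  · subst hxu
    exact isTwin_iff.mpr ⟨hvu, hcommon, w, hvw_adj.mpr hvx, hwu.ne⟩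
  · exact isTwin_iff.mpr ⟨hvu, hcommon, x, hvx, hxu⟩

theorem FoliageEq.symm (h : FoliageEq G v w) : FoliageEq G w v := by
  rcases h with rfl | h | h | h
  exacts [Or.inl rfl, Or.inr (Or.inr (Or.inl h)), Or.inr (Or.inl h), Or.inr (Or.inr (Or.inr h.symm))]

theorem FoliageEq.trans (hvw : FoliageEq G v w) (hwu : FoliageEq G w u) : FoliageEq G v u := by
  rcases hvw with rfl | hvw | hwv | hvw
  · exact hwu
  · rcases hwu with rfl | hwu | huw | hwu
    · exact Or.inr (Or.inl hvw)
    · exact Or.inl (hwu.2 v hvw.1.symm)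
    · rcases hvw.eq_or_isTwin huw with h | h
      exacts [Or.inl h, Or.inr (Or.inr (Or.inr h))]
    · exact Or.inl (hwu.eq_of_isLeafAxil hvw)
  · rcases hwu with rfl | hwu | huw | hwu
    · exact Or.inr (Or.inr (Or.inl hwv))
    · exact Or.inl (hwv.2 u hwu.1).symm
    · exact Or.inl (hwv.2 u huw.1.symm).symm
    · exact Or.inr (Or.inr (Or.inl (hwu.symm.isLeafAxil hwv)))
  · rcases hwu with rfl | hwu | huw | hwu
    · exact Or.inr (Or.inr (Or.inr hvw))
    · exact Or.inr (Or.inl (hvw.isLeafAxil hwu))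
    · exact Or.inl (hvw.symm.eq_of_isLeafAxil huw).symm
    · rcases hvw.eq_or_isTwin hwu with h | h
      exacts [Or.inl h, Or.inr (Or.inr (Or.inr h))]

theorem foliageEq_equivalence_general {V : Type*} (G : SimpleGraph V) :
    Equivalence (FoliageEq G) :=
  ⟨fun _ => Or.inl rfl, FoliageEq.symm, FoliageEq.trans⟩

/-- foliage-equivalence is an equivalence relation on the vertex set. -/
theorem foliageEq_equivalence {V : Type*} [Fintype V] (G : SimpleGraph V) :
    Equivalence (FoliageEq G) :=
  foliageEq_equivalence_general G
end

section
/- Let G be a finite simple graph with foliage partition F_W = {W_1, ..., W_k} of its vertex set, and let R = {w_1, ..., w_k} be any choice of representatives with w_i ∈ W_i. Then the foliage graph labeling F_{W,R}(G) — the graph on vertex set R in which w_i and w_j (i ≠ j) are adjacent if and only if some vertex of W_i is adjacent in G to some vertex of W_j — is a vertex-minor of G. -/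
/-- A finite simple graph with an explicit vertex set `verts` inside an ambient type `V`. -/
structure FGraph (V : Type*) where
  verts : Finset V
  Adj : V → V → Prop
  symm : ∀ x y, Adj x y → Adj y x
  loopless : ∀ x, ¬ Adj x x
  mem_of_adj : ∀ x y, Adj x y → x ∈ verts ∧ y ∈ verts

variable {V : Type*}

/-- Local complementation `τ_a(G)`: toggle every edge between distinct neighbors of `a`. -/
def FGraph.lc (G : FGraph V) (a : V) : FGraph V where
  verts := G.verts
  Adj x y := (G.Adj x y ∧ ¬(x ≠ y ∧ G.Adj a x ∧ G.Adj a y)) ∨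
             ((x ≠ y ∧ G.Adj a x ∧ G.Adj a y) ∧ ¬ G.Adj x y)
  symm := by
    rintro x y (⟨h1, h2⟩ | ⟨⟨hne, hx, hy⟩, h2⟩)
    · exact Or.inl ⟨G.symm _ _ h1, fun h => h2 ⟨h.1.symm, h.2.2, h.2.1⟩⟩
    · exact Or.inr ⟨⟨hne.symm, hy, hx⟩, fun h => h2 (G.symm _ _ h)⟩
  loopless := by
    rintro x (⟨h1, _⟩ | ⟨⟨hne, _, _⟩, _⟩)
    · exact G.loopless x h1
    · exact hne rfl
  mem_of_adj := by
    rintro x y (⟨h1, _⟩ | ⟨⟨hne, hx, hy⟩, _⟩)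
    · exact G.mem_of_adj _ _ h1
    · exact ⟨(G.mem_of_adj _ _ hx).2, (G.mem_of_adj _ _ hy).2⟩

/-- Vertex deletion `G \ v`. -/
def FGraph.delete [DecidableEq V] (G : FGraph V) (v : V) : FGraph V where
  verts := G.verts.erase v
  Adj x y := G.Adj x y ∧ x ≠ v ∧ y ≠ v
  symm := by rintro x y ⟨h, hx, hy⟩; exact ⟨G.symm _ _ h, hy, hx⟩
  loopless := by rintro x ⟨h, _⟩; exact G.loopless x h
  mem_of_adj := by
    rintro x y ⟨h, hx, hy⟩
    exact ⟨Finset.mem_erase.2 ⟨hx, (G.mem_of_adj _ _ h).1⟩,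
           Finset.mem_erase.2 ⟨hy, (G.mem_of_adj _ _ h).2⟩⟩

/-- One step: a local complementation or a vertex deletion. -/
def FGraph.Step [DecidableEq V] (G G' : FGraph V) : Prop :=
  (∃ a, G' = G.lc a) ∨ (∃ v, G' = G.delete v)

/-- `H` is a vertex-minor of `G` (written `H < G`): `H` is obtained from `G` by a finite
sequence of local complementations and vertex deletions. -/
def IsVertexMinor [DecidableEq V] (H G : FGraph V) : Prop :=
  Relation.ReflTransGen FGraph.Step G H

/-- `(l, a)` is a leaf-axil pair: `l` has degree 1 and its unique neighbor is `a`. -/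
def FGraph.IsLeafAxil (G : FGraph V) (l a : V) : Prop :=
  G.Adj l a ∧ ∀ x, G.Adj l x → x = a

/-- `v` and `w` are twins: `N_v \ {w} = N_w \ {v} ≠ ∅`. -/
def FGraph.IsTwin (G : FGraph V) (v w : V) : Prop :=
  v ≠ w ∧ {x | G.Adj v x} \ {w} = {x | G.Adj w x} \ {v} ∧
    ({x | G.Adj v x} \ {w}).Nonempty

/-- Foliage equivalence `v ∼_F w`. -/
def FGraph.FoliageEq (G : FGraph V) (v w : V) : Prop :=
  v = w ∨ G.IsLeafAxil v w ∨ G.IsLeafAxil w v ∨ G.IsTwin v w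

/-- `P` is a partition of the set `S`. -/
def IsPartitionOn (P : Set (Set V)) (S : Set V) : Prop :=
  (∀ A ∈ P, A.Nonempty) ∧ (∀ A ∈ P, A ⊆ S) ∧ (∀ v ∈ S, ∃! A, A ∈ P ∧ v ∈ A)

/-- A foliage partition of `G`: a partition of the vertex set each of whose blocks
consists of pairwise foliage-equivalent vertices. -/
def FGraph.IsFoliagePartition (G : FGraph V) (P : Set (Set V)) : Prop :=
  IsPartitionOn P ↑G.verts ∧ ∀ A ∈ P, ∀ v ∈ A, ∀ w ∈ A, G.FoliageEq v w

/-- The foliage graph labeling `F_{W,R}(G)`: the graph on the representative set `R`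
where two representatives are adjacent iff their (distinct) blocks have an edge of `G`
between them. -/
def FGraph.labeling (G : FGraph V) (P : Set (Set V)) (R : Finset V) : FGraph V where
  verts := R
  Adj x y := x ≠ y ∧ x ∈ R ∧ y ∈ R ∧
    ∃ A ∈ P, ∃ B ∈ P, A ≠ B ∧ x ∈ A ∧ y ∈ B ∧ ∃ u ∈ A, ∃ v ∈ B, G.Adj u v
  symm := by
    rintro x y ⟨hne, hx, hy, A, hA, B, hB, hAB, hxA, hyB, u, hu, v, hv, huv⟩
    exact ⟨hne.symm, hy, hx, B, hB, A, hA, hAB.symm, hyB, hxA, v, hv, u, hu, G.symm _ _ huv⟩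
  loopless := by rintro x ⟨hne, _⟩; exact hne rfl
  mem_of_adj := by rintro x y ⟨_, hx, hy, _⟩; exact ⟨hx, hy⟩

/-!
Every block `A` of a foliage partition has a hub: a vertex of `A` adjacent to every vertex
outside `A` that has a neighbour in `A`. If the representative `w` of `A` is not itself a hub, it
is a leaf whose axil `a` is one, and local complementation at `a` and then at `w` just exchanges
the labels `w` and `a`. Such a relabelling maps every block to itself, so it keeps the foliage
partition and the edges between blocks. Once every representative is a hub, deleting all other
vertices leaves exactly the foliage graph labeling.
-/

lemma Equiv.swap_apply_mem_iff [DecidableEq V] {s : Set V} {l a x : V} (h : l ∈ s ↔ a ∈ s) :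
    Equiv.swap l a x ∈ s ↔ x ∈ s := by
  grind

namespace IsPartitionOn

variable {P : Set (Set V)} {S : Set V}

lemma eq_of_mem (hP : IsPartitionOn P S) {A B : Set V} {x : V} (hA : A ∈ P) (hB : B ∈ P)
    (hxA : x ∈ A) (hxB : x ∈ B) : A = B :=
  (hP.2.2 x (hP.2.1 A hA hxA)).unique ⟨hA, hxA⟩ ⟨hB, hxB⟩

lemma mem_iff (hP : IsPartitionOn P S) {x : V} : x ∈ S ↔ ∃ A ∈ P, x ∈ A :=
  ⟨fun hx => (hP.2.2 x hx).exists, fun ⟨A, hA, hxA⟩ => hP.2.1 A hA hxA⟩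

lemma swap_apply_mem_iff [DecidableEq V] (hP : IsPartitionOn P S) {A B : Set V} {l a x : V}
    (hA : A ∈ P) (hl : l ∈ A) (ha : a ∈ A) (hB : B ∈ P) :
    Equiv.swap l a x ∈ B ↔ x ∈ B :=
  Equiv.swap_apply_mem_iff
    ⟨fun hlB => hP.eq_of_mem hA hB hl hlB ▸ ha, fun haB => hP.eq_of_mem hA hB ha haB ▸ hl⟩

end IsPartitionOn

lemma IsVertexMinor.refl [DecidableEq V] (G : FGraph V) : IsVertexMinor G G :=
  Relation.ReflTransGen.refl

lemma IsVertexMinor.trans [DecidableEq V] {G H K : FGraph V} (h₁ : IsVertexMinor H G)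
    (h₂ : IsVertexMinor G K) : IsVertexMinor H K :=
  Relation.ReflTransGen.trans h₂ h₁

namespace FGraph

@[ext]
lemma ext {G H : FGraph V} (hverts : G.verts = H.verts)
    (hadj : ∀ x y, G.Adj x y ↔ H.Adj x y) : G = H := by
  rcases G with ⟨vG, aG, _, _, _⟩
  rcases H with ⟨vH, aH, _, _, _⟩
  obtain rfl : vG = vH := hverts
  obtain rfl : aG = aH := funext₂ fun x y => propext (hadj x y)
  rfl

def relabel (G : FGraph V) (σ : Equiv.Perm V) : FGraph V where
  verts := G.verts.map σ.symm.toEmbedding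
  Adj x y := G.Adj (σ x) (σ y)
  symm _ _ := G.symm _ _
  loopless _ := G.loopless _
  mem_of_adj x y h := by simpa [Finset.mem_map_equiv] using G.mem_of_adj _ _ h

def deleteFinset [DecidableEq V] (G : FGraph V) (D : Finset V) : FGraph V where
  verts := G.verts \ D
  Adj x y := G.Adj x y ∧ x ∉ D ∧ y ∉ D
  symm _ _ h := ⟨G.symm _ _ h.1, h.2.2, h.2.1⟩
  loopless x h := G.loopless x h.1
  mem_of_adj _ _ h :=
    ⟨Finset.mem_sdiff.2 ⟨(G.mem_of_adj _ _ h.1).1, h.2.1⟩,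
      Finset.mem_sdiff.2 ⟨(G.mem_of_adj _ _ h.1).2, h.2.2⟩⟩

def IsHub (G : FGraph V) (A : Set V) (a : V) : Prop :=
  a ∈ A ∧ ∀ u ∈ A, ∀ v ∉ A, G.Adj u v → G.Adj a v

variable {G : FGraph V} {σ : Equiv.Perm V} {P : Set (Set V)} {A : Set V} {l a x y : V}

@[simp]
lemma relabel_adj : (G.relabel σ).Adj x y ↔ G.Adj (σ x) (σ y) := Iff.rfl

@[simp]
lemma mem_relabel_verts : x ∈ (G.relabel σ).verts ↔ σ x ∈ G.verts := by
  simp [relabel, Finset.mem_map_equiv]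

@[simp]
lemma relabel_one (G : FGraph V) : G.relabel 1 = G := by
  ext <;> simp

lemma verts_relabel (hP : IsPartitionOn P G.verts) (hσ : ∀ B ∈ P, ∀ x, σ x ∈ B ↔ x ∈ B) :
    (G.relabel σ).verts = G.verts := by
  ext x
  rw [mem_relabel_verts, ← Finset.mem_coe, ← Finset.mem_coe, hP.mem_iff, hP.mem_iff]
  exact exists_congr fun B => and_congr_right fun hB => hσ B hB x

lemma IsLeafAxil.relabel (h : G.IsLeafAxil (σ l) (σ a)) : (G.relabel σ).IsLeafAxil l a :=
  ⟨h.1, fun _ hz => σ.injective (h.2 _ hz)⟩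

lemma IsTwin.relabel (h : G.IsTwin (σ x) (σ y)) : (G.relabel σ).IsTwin x y := by
  have hN : ∀ v w, {z | (G.relabel σ).Adj v z} \ {w} = σ ⁻¹' ({z | G.Adj (σ v) z} \ {σ w}) :=
    fun v w => by ext; simp [σ.injective.eq_iff]
  exact ⟨fun e => h.1 (congrArg σ e), by rw [hN, hN, h.2.1],
    by rw [hN]; exact h.2.2.preimage σ.surjective⟩

lemma FoliageEq.relabel (h : G.FoliageEq (σ x) (σ y)) : (G.relabel σ).FoliageEq x y := by
  rcases h with h | h | h | h
  · exact Or.inl (σ.injective h)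
  · exact Or.inr (Or.inl h.relabel)
  · exact Or.inr (Or.inr (Or.inl h.relabel))
  · exact Or.inr (Or.inr (Or.inr h.relabel))

lemma IsFoliagePartition.relabel (hP : G.IsFoliagePartition P)
    (hσ : ∀ B ∈ P, ∀ x, σ x ∈ B ↔ x ∈ B) : (G.relabel σ).IsFoliagePartition P := by
  refine ⟨by rw [verts_relabel hP.1 hσ]; exact hP.1, fun A hA v hv w hw => ?_⟩
  exact (hP.2 A hA _ ((hσ A hA v).2 hv) _ ((hσ A hA w).2 hw)).relabel

lemma IsHub.relabel (h : G.IsHub A (σ a)) (hσ : ∀ x, σ x ∈ A ↔ x ∈ A) :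
    (G.relabel σ).IsHub A a :=
  ⟨(hσ a).1 h.1, fun u hu v hv huv => h.2 _ ((hσ u).2 hu) _ (mt (hσ v).1 hv) huv⟩

lemma exists_adj_relabel_iff {B : Set V} (hA : ∀ x, σ x ∈ A ↔ x ∈ A)
    (hB : ∀ x, σ x ∈ B ↔ x ∈ B) :
    (∃ u ∈ A, ∃ v ∈ B, G.Adj (σ u) (σ v)) ↔ ∃ u ∈ A, ∃ v ∈ B, G.Adj u v := by
  refine ⟨fun ⟨u, hu, v, hv, huv⟩ => ⟨σ u, (hA u).2 hu, σ v, (hB v).2 hv, huv⟩,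
    fun ⟨u, hu, v, hv, huv⟩ => ⟨σ.symm u, ?_, σ.symm v, ?_, by simpa using huv⟩⟩
  · rwa [← hA, Equiv.apply_symm_apply]
  · rwa [← hB, Equiv.apply_symm_apply]

lemma labeling_relabel (R : Finset V) (hσ : ∀ B ∈ P, ∀ x, σ x ∈ B ↔ x ∈ B) :
    (G.relabel σ).labeling P R = G.labeling P R := by
  ext x y
  · rfl
  · simp only [labeling, relabel_adj]
    refine and_congr_right fun _ => and_congr_right fun _ => and_congr_right fun _ =>
      exists_congr fun A => and_congr_right fun hA => exists_congr fun B =>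
        and_congr_right fun hB => ?_
    exact and_congr_right fun _ => and_congr_right fun _ => and_congr_right fun _ =>
      exists_adj_relabel_iff (hσ A hA) (hσ B hB)

section VertexMinor

variable [DecidableEq V]

lemma isVertexMinor_lc (G : FGraph V) (a : V) : IsVertexMinor (G.lc a) G :=
  Relation.ReflTransGen.single (Or.inl ⟨a, rfl⟩)

lemma isVertexMinor_delete (G : FGraph V) (v : V) : IsVertexMinor (G.delete v) G :=
  Relation.ReflTransGen.single (Or.inr ⟨v, rfl⟩)

lemma isVertexMinor_deleteFinset (G : FGraph V) (D : Finset V) :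
    IsVertexMinor (G.deleteFinset D) G := by
  induction D using Finset.induction_on with
  | empty =>
    convert IsVertexMinor.refl G
    ext <;> simp [deleteFinset]
  | insert v D _ ih =>
    have hD : G.deleteFinset (insert v D) = (G.deleteFinset D).delete v := by
      ext <;> simp [deleteFinset, delete] <;> tauto
    rw [hD]
    exact (isVertexMinor_delete _ v).trans ih

lemma lc_lc_eq_relabel_swap (h : G.IsLeafAxil l a) :
    (G.lc a).lc l = G.relabel (Equiv.swap l a) := by
  have hleaf : ∀ z, G.Adj l z ↔ z = a := fun z => ⟨h.2 z, by rintro rfl; exact h.1⟩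
  have hsymm := G.symm
  have hloop := G.loopless
  ext x y
  · have hl := (G.mem_of_adj _ _ h.1).1
    have ha := (G.mem_of_adj _ _ h.1).2
    rw [mem_relabel_verts]
    exact (Equiv.swap_apply_mem_iff (s := (G.verts : Set V)) (by simp [hl, ha])).symm
  · simp only [lc, relabel_adj, Equiv.swap_apply_def]
    split_ifs <;> grind

lemma isVertexMinor_relabel_swap (h : G.IsLeafAxil l a) :
    IsVertexMinor (G.relabel (Equiv.swap l a)) G := by
  rw [← lc_lc_eq_relabel_swap h]
  exact (isVertexMinor_lc _ l).trans (isVertexMinor_lc G a)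

end VertexMinor

lemma FoliageEq.isLeafAxil_or_eq {z u v : V} (h : G.FoliageEq z u) (huv : G.Adj u v)
    (hzv : ¬ G.Adj z v) (hvz : v ≠ z) : G.IsLeafAxil z u ∨ z = u := by
  rcases h with rfl | h | h | ⟨-, hN, -⟩
  · exact Or.inr rfl
  · exact Or.inl h
  · exact absurd (h.2 v huv) hvz
  · have hv : v ∈ {x | G.Adj u x} \ {z} := ⟨huv, hvz⟩
    rw [← hN] at hv
    exact absurd hv.1 hzv

lemma IsFoliagePartition.isHub_or_exists_isLeafAxil_isHub (hP : G.IsFoliagePartition P)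
    (hA : A ∈ P) {w : V} (hw : w ∈ A) : G.IsHub A w ∨ ∃ a, G.IsLeafAxil w a ∧ G.IsHub A a := by
  have key : ∀ u ∈ A, ∀ v ∉ A, ∀ z ∈ A, G.Adj u v → ¬ G.Adj z v → G.IsLeafAxil z u ∨ z = u :=
    fun u hu v hv z hz huv hzv =>
      (hP.2 A hA z hz u hu).isLeafAxil_or_eq huv hzv (by rintro rfl; exact hv hz)
  refine or_iff_not_imp_left.2 fun hw_hub => ?_
  obtain ⟨u, hu, v, hv, huv, hwv⟩ : ∃ u ∈ A, ∃ v ∉ A, G.Adj u v ∧ ¬ G.Adj w v := by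
    simpa [IsHub, hw] using hw_hub
  have hwu : G.IsLeafAxil w u :=
    (key u hu v hv w hw huv hwv).resolve_right (by rintro rfl; exact hwv huv)
  refine ⟨u, hwu, hu, fun u' hu' v' hv' hu'v' => by_contra fun huv' => ?_⟩
  rcases key u' hu' v' hv' u hu hu'v' huv' with hleaf | rfl
  · exact hv (hleaf.2 v huv ▸ hu')
  · exact huv' hu'v'

variable [DecidableEq V]

lemma IsFoliagePartition.exists_relabel_isHub (hP : G.IsFoliagePartition P) (hA : A ∈ P)
    {w : V} (hw : w ∈ A) :
    ∃ σ : Equiv.Perm V, IsVertexMinor (G.relabel σ) G ∧ (∀ B ∈ P, ∀ x, σ x ∈ B ↔ x ∈ B) ∧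
      (∀ x ∉ A, σ x = x) ∧ (G.relabel σ).IsHub A w := by
  rcases hP.isHub_or_exists_isLeafAxil_isHub hA hw with hhub | ⟨a, hwa, hhub⟩
  · exact ⟨1, by simpa using IsVertexMinor.refl G, by simp, by simp, by simpa using hhub⟩
  · refine ⟨Equiv.swap w a, isVertexMinor_relabel_swap hwa,
      fun B hB x => hP.1.swap_apply_mem_iff hA hw hhub.1 hB, fun x hx => ?_, ?_⟩
    · exact Equiv.swap_apply_of_ne_of_ne (by rintro rfl; exact hx hw)
        (by rintro rfl; exact hx hhub.1)
    · exact IsHub.relabel (by rwa [Equiv.swap_apply_left])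
        fun x => hP.1.swap_apply_mem_iff hA hw hhub.1 hA

lemma IsFoliagePartition.exists_isVertexMinor_isHub (hP : G.IsFoliagePartition P)
    (R T : Finset V) (hT : ∀ A ∈ P, (A ∩ ↑T).Subsingleton) :
    ∃ H, IsVertexMinor H G ∧ H.IsFoliagePartition P ∧ H.labeling P R = G.labeling P R ∧
      ∀ A ∈ P, ∀ w ∈ A, w ∈ T → H.IsHub A w := by
  induction T using Finset.induction_on with
  | empty => exact ⟨G, IsVertexMinor.refl G, hP, rfl, by simp⟩
  | insert w T hwT ih =>
    obtain ⟨H, hHG, hHP, hlab, hhub⟩ := ih fun A hA =>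
      (hT A hA).anti (Set.inter_subset_inter_right A (by simp))
    by_cases hwP : ∃ A ∈ P, w ∈ A
    · obtain ⟨A, hA, hwA⟩ := hwP
      obtain ⟨σ, hσG, hσP, hσA, hσhub⟩ := hHP.exists_relabel_isHub hA hwA
      refine ⟨H.relabel σ, hσG.trans hHG, hHP.relabel hσP, (labeling_relabel R hσP).trans hlab,
        fun B hB u huB huT => ?_⟩
      rcases Finset.mem_insert.1 huT with rfl | huT
      · rwa [hHP.1.eq_of_mem hB hA huB hwA]
      · have huA : u ∉ A := fun huA =>
          hwT ((hT A hA ⟨hwA, by simp⟩ ⟨huA, by simp [huT]⟩) ▸ huT)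
        exact IsHub.relabel (by rw [hσA u huA]; exact hhub B hB u huB huT) (hσP B hB)
    · refine ⟨H, hHG, hHP, hlab, fun A hA u huA huT => ?_⟩
      rcases Finset.mem_insert.1 huT with rfl | huT
      · exact absurd ⟨A, hA, huA⟩ hwP
      · exact hhub A hA u huA huT

lemma deleteFinset_sdiff_eq_labeling (hP : IsPartitionOn P G.verts) {R : Finset V}
    (hR1 : ∀ A ∈ P, ∃! w, w ∈ A ∧ w ∈ R) (hR2 : ∀ w ∈ R, ∃ A ∈ P, w ∈ A)
    (hhub : ∀ A ∈ P, ∀ w ∈ A, w ∈ R → G.IsHub A w) :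
    G.deleteFinset (G.verts \ R) = G.labeling P R := by
  have hRV : R ⊆ G.verts := fun w hw =>
    let ⟨A, hA, hwA⟩ := hR2 w hw
    hP.2.1 A hA hwA
  ext x y
  · simp [deleteFinset, labeling, Finset.sdiff_sdiff_eq_self hRV]
  simp only [deleteFinset, labeling, Finset.mem_sdiff, not_and, not_not]
  constructor
  · rintro ⟨hxy, hx, hy⟩
    have hxR := hx (G.mem_of_adj _ _ hxy).1
    have hyR := hy (G.mem_of_adj _ _ hxy).2
    obtain ⟨A, hA, hxA⟩ := hR2 x hxR
    obtain ⟨B, hB, hyB⟩ := hR2 y hyR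
    refine ⟨fun e => G.loopless x (e ▸ hxy), hxR, hyR, A, hA, B, hB, ?_, hxA, hyB,
      x, hxA, y, hyB, hxy⟩
    rintro rfl
    exact G.loopless x ((hR1 A hA).unique ⟨hxA, hxR⟩ ⟨hyB, hyR⟩ ▸ hxy)
  · rintro ⟨-, hxR, hyR, A, hA, B, hB, hAB, hxA, hyB, u, hu, v, hv, huv⟩
    -- the edge `u v` between the two blocks moves to `x v` and then to `x y`, as both are hubs
    have hxv := (hhub A hA x hxA hxR).2 u hu v (fun hvA => hAB (hP.eq_of_mem hA hB hvA hv)) huv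
    have hyx := (hhub B hB y hyB hyR).2 v hv x (fun hxB => hAB (hP.eq_of_mem hA hB hxA hxB))
      (G.symm _ _ hxv)
    exact ⟨G.symm _ _ hyx, fun _ => hxR, fun _ => hyR⟩

end FGraph

/-- the foliage graph labeling is a vertex-minor of `G`. -/
theorem labeling_isVertexMinor {V : Type*} [DecidableEq V] (G : FGraph V)
    (P : Set (Set V)) (hP : G.IsFoliagePartition P) (R : Finset V)
    (hR1 : ∀ A ∈ P, ∃! w, w ∈ A ∧ w ∈ R)
    (hR2 : ∀ w ∈ R, ∃ A ∈ P, w ∈ A) :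
    IsVertexMinor (G.labeling P R) G := by
  obtain ⟨H, hHG, hHP, hlab, hhub⟩ := hP.exists_isVertexMinor_isHub R R
    fun A hA x hx y hy => (hR1 A hA).unique hx hy
  rw [← hlab, ← H.deleteFinset_sdiff_eq_labeling hHP.1 hR1 hR2 hhub]
  exact (H.isVertexMinor_deleteFinset _).trans hHG
end

section
/- Let G and G' be finite simple graphs with G' a vertex-minor of G, and let A be a set of vertices of G that are pairwise foliage-equivalent in G. Then exactly one of the following holds for the set A ∩ V(G') of surviving vertices: the vertices of A ∩ V(G') are pairwise foliage-equivalent in G', or every vertex of A ∩ V(G') is isolated in G', or A ∩ V(G') is empty. -/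
variable {V : Type*}

/-- A vertex is isolated if it belongs to the graph but has no neighbors. -/
def FGraph.Isolated (G : FGraph V) (v : V) : Prop :=
  v ∈ G.verts ∧ ∀ w, ¬ G.Adj v w

/-!
Foliage equivalence of a single pair is stable under vertex-minors, up to one degeneration:
it survives every local complementation, and deleting a third vertex `u` preserves it unless
`v, w` were non-adjacent twins with common neighbourhood `{u}`, in which case both become
isolated. Isolated vertices stay isolated, and an isolated vertex is foliage-equivalent only to
itself, so a single degenerate pair in `A` forces every surviving vertex of `A` to be isolated.
-/

namespace FGraph

variable {H H' : FGraph V} {l a p u v w x y : V}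

def AgreeOff (H : FGraph V) (v w : V) : Prop :=
  ∀ x, x ≠ v → x ≠ w → (H.Adj v x ↔ H.Adj w x)

theorem ne_of_adj (h : H.Adj v w) : v ≠ w := by
  rintro rfl
  exact H.loopless v h

theorem isTwin_iff : H.IsTwin v w ↔ v ≠ w ∧ H.AgreeOff v w ∧ ∃ x, x ≠ w ∧ H.Adj v x := by
  constructor
  · rintro ⟨hvw, heq, x, hx, hxw⟩
    refine ⟨hvw, fun y hyv hyw => ?_, x, hxw, hx⟩
    simpa [hyv, hyw] using Set.ext_iff.1 heq y
  · rintro ⟨hvw, hag, x, hxw, hx⟩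
    refine ⟨hvw, Set.ext fun y => ?_, x, hx, hxw⟩
    by_cases hyv : y = v
    · simp [hyv, H.loopless]
    by_cases hyw : y = w
    · simp [hyw, H.loopless]
    simp [hyv, hyw, hag y hyv hyw]

theorem IsTwin.symm (h : H.IsTwin v w) : H.IsTwin w v :=
  ⟨h.1.symm, h.2.1.symm, h.2.1 ▸ h.2.2⟩

theorem FoliageEq.symm (h : H.FoliageEq v w) : H.FoliageEq w v := by
  rcases h with h | h | h | h
  · exact Or.inl h.symm
  · exact Or.inr (Or.inr (Or.inl h))
  · exact Or.inr (Or.inl h)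
  · exact Or.inr (Or.inr (Or.inr h.symm))

theorem foliageEq_of_agreeOff (hvw : v ≠ w) (hag : H.AgreeOff v w)
    (hnb : H.Adj v w ∨ ∃ x, x ≠ w ∧ H.Adj v x) : H.FoliageEq v w := by
  by_cases hx : ∃ x, x ≠ w ∧ H.Adj v x
  · exact Or.inr <| Or.inr <| Or.inr <| isTwin_iff.2 ⟨hvw, hag, hx⟩
  · refine Or.inr <| Or.inl ⟨hnb.resolve_right hx, fun x hvx => ?_⟩
    by_contra hxw
    exact hx ⟨x, hxw, hvx⟩

theorem Isolated.eq_of_foliageEq (hv : H.Isolated v) (h : H.FoliageEq v w) : v = w := by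
  rcases h with h | h | h | h
  · exact h
  · exact absurd h.1 (hv.2 w)
  · exact absurd (H.symm _ _ h.1) (hv.2 w)
  · obtain ⟨x, hx, -⟩ := h.2.2
    exact absurd hx (hv.2 x)

theorem lc_adj : (H.lc p).Adj x y ↔ (H.Adj x y ↔ ¬(x ≠ y ∧ H.Adj p x ∧ H.Adj p y)) :=
  xor_iff_iff_not

theorem lc_adj_of_not_adj (h : ¬ H.Adj p x) : (H.lc p).Adj x y ↔ H.Adj x y := by
  simp [lc_adj, h]

theorem lc_adj_self : (H.lc p).Adj p y ↔ H.Adj p y :=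
  lc_adj_of_not_adj (H.loopless p)

theorem Isolated.lc (hv : H.Isolated v) (p : V) : (H.lc p).Isolated v :=
  ⟨hv.1, fun x hx => hv.2 x ((lc_adj_of_not_adj fun h => hv.2 p (H.symm _ _ h)).1 hx)⟩

theorem IsLeafAxil.lc (h : H.IsLeafAxil l a) (p : V) : (H.lc p).FoliageEq l a := by
  obtain ⟨hla, hl⟩ := h
  by_cases hpa : p = a
  · subst hpa
    -- `τ_p` joins `l` to every other neighbour of its axil `p`.
    refine foliageEq_of_agreeOff (H.ne_of_adj hla) (fun x hxl hxp => ?_)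
      (Or.inl ((H.lc p).symm _ _ (lc_adj_self.2 (H.symm _ _ hla))))
    have hlx : ¬ H.Adj l x := fun h => hxp (hl x h)
    simp [lc_adj_self, lc_adj, hlx, Ne.symm hxl, H.symm _ _ hla]
  · have hpl : ¬ H.Adj p l := fun h => hpa (hl p (H.symm _ _ h))
    exact Or.inr <| Or.inl
      ⟨(lc_adj_of_not_adj hpl).2 hla, fun x hx => hl x ((lc_adj_of_not_adj hpl).1 hx)⟩

theorem IsTwin.lc_isLeafAxil (h : H.IsTwin v w) (hvw : H.Adj v w) :
    (H.lc v).IsLeafAxil w v := by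
  obtain ⟨-, hag, -⟩ := isTwin_iff.1 h
  refine ⟨(H.lc v).symm _ _ (lc_adj_self.2 hvw), fun x hx => ?_⟩
  by_contra hxv
  have hxw : x ≠ w := ((H.lc v).ne_of_adj hx).symm
  have := hag x hxv hxw
  simp only [lc_adj] at hx
  tauto

theorem IsTwin.lc (h : H.IsTwin v w) (p : V) : (H.lc p).FoliageEq v w := by
  by_cases hpv : p = v ∧ H.Adj v w
  · obtain ⟨rfl, hvw⟩ := hpv
    exact Or.inr <| Or.inr <| Or.inl (h.lc_isLeafAxil hvw)
  by_cases hpw : p = w ∧ H.Adj v w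
  · obtain ⟨rfl, hvw⟩ := hpw
    exact Or.inr <| Or.inl (h.symm.lc_isLeafAxil (H.symm _ _ hvw))
  obtain ⟨hvw, hag, y, hyw, hvy⟩ := isTwin_iff.1 h
  have hp : H.Adj p v ↔ H.Adj p w := by
    by_cases hpv' : p = v
    · subst hpv'
      simp only [H.loopless, false_iff]
      exact fun hpw' => hpv ⟨rfl, hpw'⟩
    by_cases hpw' : p = w
    · subst hpw'
      simp only [H.loopless, iff_false]
      exact fun hpv'' => hpw ⟨rfl, H.symm _ _ hpv''⟩
    exact ⟨fun h => H.symm _ _ ((hag p hpv' hpw').1 (H.symm _ _ h)),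
      fun h => H.symm _ _ ((hag p hpv' hpw').2 (H.symm _ _ h))⟩
  refine Or.inr <| Or.inr <| Or.inr <| isTwin_iff.2 ⟨hvw, fun x hxv hxw => ?_, ?_⟩
  · have := hag x hxv hxw
    simp only [lc_adj]
    tauto
  · by_cases hpv' : H.Adj p v
    · refine ⟨p, fun hpw' => hpw ⟨hpw', H.symm _ _ (hpw' ▸ hpv')⟩, ?_⟩
      exact (H.lc p).symm _ _ (lc_adj_self.2 hpv')
    · exact ⟨y, hyw, (lc_adj_of_not_adj hpv').2 hvy⟩

theorem FoliageEq.lc (h : H.FoliageEq v w) (p : V) : (H.lc p).FoliageEq v w := by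
  rcases h with h | h | h | h
  · exact Or.inl h
  · exact h.lc p
  · exact (h.lc p).symm
  · exact h.lc p

section VertexMinor

variable [DecidableEq V]

theorem delete_adj : (H.delete u).Adj x y ↔ H.Adj x y ∧ x ≠ u ∧ y ≠ u :=
  Iff.rfl

theorem mem_delete_verts : x ∈ (H.delete u).verts ↔ x ≠ u ∧ x ∈ H.verts :=
  Finset.mem_erase

theorem Isolated.delete (hv : H.Isolated v) (hv' : v ∈ (H.delete u).verts) :
    (H.delete u).Isolated v :=
  ⟨hv', fun x hx => hv.2 x hx.1⟩

theorem IsLeafAxil.delete (h : H.IsLeafAxil l a) (hl : l ≠ u) (ha : a ≠ u) :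
    (H.delete u).IsLeafAxil l a :=
  ⟨⟨h.1, hl, ha⟩, fun x hx => h.2 x hx.1⟩

theorem IsTwin.delete (h : H.IsTwin v w) (hv : v ∈ (H.delete u).verts)
    (hw : w ∈ (H.delete u).verts) :
    (H.delete u).FoliageEq v w ∨ ((H.delete u).Isolated v ∧ (H.delete u).Isolated w) := by
  obtain ⟨hvw, hag, -⟩ := isTwin_iff.1 h
  have hvu := (mem_delete_verts.1 hv).1
  have hwu := (mem_delete_verts.1 hw).1
  have hag' : (H.delete u).AgreeOff v w := fun x hxv hxw => by
    simp only [delete_adj, hag x hxv hxw, hvu, hwu, ne_eq, not_false_eq_true, true_and]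
  by_cases hnb : (H.delete u).Adj v w ∨ ∃ x, x ≠ w ∧ (H.delete u).Adj v x
  · exact Or.inl (foliageEq_of_agreeOff hvw hag' hnb)
  push Not at hnb
  obtain ⟨hnvw, hnv⟩ := hnb
  have hv_iso : (H.delete u).Isolated v := ⟨hv, fun x hx => by
    by_cases hxw : x = w
    · exact hnvw (hxw ▸ hx)
    · exact hnv x hxw hx⟩
  refine Or.inr ⟨hv_iso, hw, fun x hx => ?_⟩
  by_cases hxv : x = v
  · exact hnvw ((H.delete u).symm _ _ (hxv ▸ hx))
  · exact hv_iso.2 x ((hag' x hxv ((H.delete u).ne_of_adj hx).symm).2 hx)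

theorem FoliageEq.delete (h : H.FoliageEq v w) (hv : v ∈ (H.delete u).verts)
    (hw : w ∈ (H.delete u).verts) :
    (H.delete u).FoliageEq v w ∨ ((H.delete u).Isolated v ∧ (H.delete u).Isolated w) := by
  have hvu := (mem_delete_verts.1 hv).1
  have hwu := (mem_delete_verts.1 hw).1
  rcases h with h | h | h | h
  · exact Or.inl (Or.inl h)
  · exact Or.inl (Or.inr (Or.inl (h.delete hvu hwu)))
  · exact Or.inl (Or.inr (Or.inr (Or.inl (h.delete hwu hvu))))
  · exact h.delete hv hw

theorem Step.verts_subset (hs : H.Step H') : H'.verts ⊆ H.verts := by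
  rcases hs with ⟨p, rfl⟩ | ⟨u, rfl⟩
  · exact subset_rfl
  · exact Finset.erase_subset u H.verts

theorem Isolated.step (hs : H.Step H') (hv : H.Isolated v) (hv' : v ∈ H'.verts) :
    H'.Isolated v := by
  rcases hs with ⟨p, rfl⟩ | ⟨u, rfl⟩
  · exact hv.lc p
  · exact hv.delete hv'

theorem FoliageEq.step (hs : H.Step H') (h : H.FoliageEq v w) (hv : v ∈ H'.verts)
    (hw : w ∈ H'.verts) : H'.FoliageEq v w ∨ (H'.Isolated v ∧ H'.Isolated w) := by
  rcases hs with ⟨p, rfl⟩ | ⟨u, rfl⟩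
  · exact Or.inl (h.lc p)
  · exact h.delete hv hw

theorem FoliageEq.of_isVertexMinor (hH : IsVertexMinor H' H) (h : H.FoliageEq v w)
    (hv : v ∈ H'.verts) (hw : w ∈ H'.verts) :
    H'.FoliageEq v w ∨ (H'.Isolated v ∧ H'.Isolated w) := by
  induction hH with
  | refl => exact Or.inl h
  | tail _ hs ih =>
    rcases ih (hs.verts_subset hv) (hs.verts_subset hw) with h' | ⟨hv', hw'⟩
    · exact h'.step hs hv hw
    · exact Or.inr ⟨hv'.step hs hv, hw'.step hs hw⟩

end VertexMinor

end FGraph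

theorem foliageEq_set_vertexMinor_general {V : Type*} [DecidableEq V] (G G' : FGraph V)
    (h : IsVertexMinor G' G) (A : Set V)
    (hfol : ∀ v ∈ A, ∀ w ∈ A, G.FoliageEq v w) :
    (∀ v ∈ A ∩ ↑G'.verts, ∀ w ∈ A ∩ ↑G'.verts, G'.FoliageEq v w) ∨
    (∀ v ∈ A ∩ ↑G'.verts, G'.Isolated v) ∨
    A ∩ ↑G'.verts = ∅ := by
  by_cases hpair : ∀ v ∈ A ∩ ↑G'.verts, ∀ w ∈ A ∩ ↑G'.verts, G'.FoliageEq v w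
  · exact Or.inl hpair
  push Not at hpair
  obtain ⟨v, hv, w, hw, hvw⟩ := hpair
  have hv_iso : G'.Isolated v :=
    (((hfol v hv.1 w hw.1).of_isVertexMinor h hv.2 hw.2).resolve_left hvw).1
  refine Or.inr (Or.inl fun x hx => ?_)
  rcases (hfol v hv.1 x hx.1).of_isVertexMinor h hv.2 hx.2 with hvx | ⟨-, hx_iso⟩
  · exact hv_iso.eq_of_foliageEq hvx ▸ hv_iso
  · exact hx_iso

/-- surviving vertices of a pairwise foliage-equivalent set are pairwise
foliage-equivalent, all isolated, or none survive. -/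
theorem foliageEq_set_vertexMinor {V : Type*} [DecidableEq V] (G G' : FGraph V)
    (h : IsVertexMinor G' G) (A : Set V) (hA : A ⊆ ↑G.verts)
    (hfol : ∀ v ∈ A, ∀ w ∈ A, G.FoliageEq v w) :
    (∀ v ∈ A ∩ ↑G'.verts, ∀ w ∈ A ∩ ↑G'.verts, G'.FoliageEq v w) ∨
    (∀ v ∈ A ∩ ↑G'.verts, G'.Isolated v) ∨
    A ∩ ↑G'.verts = ∅ :=
  foliageEq_set_vertexMinor_general G G' h A hfol
end

section
/- Let n ≥ 4 and let L_n be the line graph on vertices {1, ..., n}. Let a_1 < b_1 < b_2 < a_2 be vertices of L_n. Then the graph on vertex set {a_1, a_2, b_1, b_2} whose only edges are {a_1, a_2} and {b_1, b_2} (two Bell pairs) is not a vertex-minor of L_n. -/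
variable {V : Type*}

/-- The line graph `L_n` on vertices `{1, ..., n}` with edges `{i, i+1}`. -/
def lineGraph (n : ℕ) : FGraph ℕ where
  verts := Finset.Icc 1 n
  Adj x y := x ∈ Finset.Icc 1 n ∧ y ∈ Finset.Icc 1 n ∧ (y = x + 1 ∨ x = y + 1)
  symm := by rintro x y ⟨hx, hy, hc⟩; exact ⟨hy, hx, hc.symm⟩
  loopless := by rintro x ⟨_, _, h | h⟩ <;> omega
  mem_of_adj := by rintro x y ⟨hx, hy, _⟩; exact ⟨hx, hy⟩

/-- The ring (cycle) graph `R_n` on vertices `{1, ..., n}`. -/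
def ringGraph (n : ℕ) : FGraph ℕ where
  verts := Finset.Icc 1 n
  Adj x y := x ≠ y ∧ x ∈ Finset.Icc 1 n ∧ y ∈ Finset.Icc 1 n ∧
    (y = x + 1 ∨ x = y + 1 ∨ (x = n ∧ y = 1) ∨ (x = 1 ∧ y = n))
  symm := by rintro x y ⟨hne, hx, hy, hc⟩; exact ⟨hne.symm, hy, hx, by tauto⟩
  loopless := by rintro x ⟨hne, _⟩; exact hne rfl
  mem_of_adj := by rintro x y ⟨_, hx, hy, _⟩; exact ⟨hx, hy⟩

/-- The successor of position `i` along the cycle `1, 2, ..., n, 1`. -/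
def cnext (n i : ℕ) : ℕ := if i = n then 1 else i + 1

/-- A Bell pair on `{a1, a2}` together with the isolated vertex `b`. -/
def bell1 {V : Type*} [DecidableEq V] (a1 a2 b : V) : FGraph V where
  verts := {a1, a2, b}
  Adj x y := x ≠ y ∧ ((x = a1 ∧ y = a2) ∨ (x = a2 ∧ y = a1))
  symm := by rintro x y ⟨hne, hc⟩; exact ⟨hne.symm, by tauto⟩
  loopless := by rintro x ⟨hne, _⟩; exact hne rfl
  mem_of_adj := by
    rintro x y ⟨_, (⟨hx, hy⟩ | ⟨hx, hy⟩)⟩ <;> subst hx <;> subst hy <;>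
      simp [Finset.mem_insert]

/-- Two Bell pairs, on `{a1, a2}` and on `{b1, b2}`. -/
def bell2 {V : Type*} [DecidableEq V] (a1 a2 b1 b2 : V) : FGraph V where
  verts := {a1, a2, b1, b2}
  Adj x y := x ≠ y ∧ ((x = a1 ∧ y = a2) ∨ (x = a2 ∧ y = a1) ∨
                      (x = b1 ∧ y = b2) ∨ (x = b2 ∧ y = b1))
  symm := by rintro x y ⟨hne, hc⟩; exact ⟨hne.symm, by tauto⟩
  loopless := by rintro x ⟨hne, _⟩; exact hne rfl
  mem_of_adj := by
    rintro x y ⟨_, (⟨hx, hy⟩ | ⟨hx, hy⟩ | ⟨hx, hy⟩ | ⟨hx, hy⟩)⟩ <;> subst hx <;> subst hy <;>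
      simp [Finset.mem_insert]

/-!
Every cut `(A, Aᶜ)` of the path `L_n` is crossed by at most one edge, so its cut-rank is at
most one: the cross edges form a complete bipartite pattern `S × T`. Local complementation
and vertex deletion preserve this property, hence so does every vertex-minor. In the two Bell
pairs, the cut `{x ≤ b₁}` is crossed by the edges `a₁a₂` and `b₁b₂`; a complete bipartite
pattern would then also force the non-edge `a₁b₂`.
-/

namespace FGraph

theorem lc_adj_s11 (G : FGraph V) (a x y : V) :
    (G.lc a).Adj x y ↔ Xor (G.Adj x y) (x ≠ y ∧ G.Adj a x ∧ G.Adj a y) :=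
  Iff.rfl

/-- The cut `(A, Aᶜ)` of `G` has cut-rank at most one (over `𝔽₂`): the edges crossing it are
exactly the pairs `S × T`. -/
def CutRankLeOne (A : Set V) (G : FGraph V) : Prop :=
  ∃ S T : V → Prop, ∀ x y, x ∈ A → y ∉ A → (G.Adj x y ↔ S x ∧ T y)

theorem cutRankLeOne_compl {A : Set V} {G : FGraph V} (h : G.CutRankLeOne A) :
    G.CutRankLeOne Aᶜ := by
  obtain ⟨S, T, h⟩ := h
  refine ⟨T, S, fun x y hx hy => ?_⟩
  rw [Set.notMem_compl_iff] at hy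
  rw [← and_comm, ← h y x hy hx]
  exact ⟨G.symm x y, G.symm y x⟩

/-- Complementing at `a ∈ A` toggles the cross edges `x y` with `x ∈ N(a)` and
`y ∈ N(a) ∖ A`, i.e. with `S a ∧ T y`: only the side `S` changes. -/
theorem CutRankLeOne.lc_of_mem {A : Set V} {G : FGraph V} (h : G.CutRankLeOne A) {a : V}
    (ha : a ∈ A) : (G.lc a).CutRankLeOne A := by
  obtain ⟨S, T, h⟩ := h
  refine ⟨fun x => Xor (S x) (S a ∧ G.Adj a x), T, fun x y hx hy => ?_⟩
  have hxy : x ≠ y := fun e => hy (e ▸ hx)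
  rw [lc_adj_s11, h x y hx hy, h a y ha hy]
  simp only [Xor]
  tauto

theorem CutRankLeOne.lc {A : Set V} {G : FGraph V} (h : G.CutRankLeOne A) (a : V) :
    (G.lc a).CutRankLeOne A := by
  by_cases ha : a ∈ A
  · exact h.lc_of_mem ha
  · have := (cutRankLeOne_compl h).lc_of_mem (Set.mem_compl ha)
    simpa only [compl_compl] using cutRankLeOne_compl this

theorem CutRankLeOne.delete [DecidableEq V] {A : Set V} {G : FGraph V} (h : G.CutRankLeOne A)
    (v : V) : (G.delete v).CutRankLeOne A := by
  obtain ⟨S, T, h⟩ := h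
  refine ⟨fun x => S x ∧ x ≠ v, fun y => T y ∧ y ≠ v, fun x y hx hy => ?_⟩
  simp only [FGraph.delete, h x y hx hy]
  tauto

theorem CutRankLeOne.of_step [DecidableEq V] {A : Set V} {G G' : FGraph V}
    (h : G.CutRankLeOne A) (hs : G.Step G') : G'.CutRankLeOne A := by
  rcases hs with ⟨a, rfl⟩ | ⟨v, rfl⟩
  · exact h.lc a
  · exact h.delete v

theorem CutRankLeOne.of_isVertexMinor [DecidableEq V] {A : Set V} {G H : FGraph V}
    (h : G.CutRankLeOne A) (hm : IsVertexMinor H G) : H.CutRankLeOne A := by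
  induction hm with
  | refl => exact h
  | tail _ hs ih => exact ih.of_step hs

end FGraph

theorem lineGraph_cutRankLeOne_Iic (n t : ℕ) : (lineGraph n).CutRankLeOne (Set.Iic t) := by
  refine ⟨fun x => x = t ∧ 1 ≤ t ∧ t + 1 ≤ n, fun y => y = t + 1, fun x y hx hy => ?_⟩
  simp only [Set.mem_Iic, not_le] at hx hy
  simp only [lineGraph, Finset.mem_Icc]
  omega

theorem bell2_not_vertexMinor_line_nested_general (n a1 b1 b2 a2 : ℕ)
    (h1 : a1 < b1) (h2 : b1 < b2) (h3 : b2 < a2) :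
    ¬ IsVertexMinor (bell2 a1 a2 b1 b2) (lineGraph n) := by
  intro hm
  obtain ⟨S, T, hcut⟩ := (lineGraph_cutRankLeOne_Iic n b1).of_isVertexMinor hm
  have ha1 : a1 ∈ Set.Iic b1 := h1.le
  have hb1 : b1 ∈ Set.Iic b1 := le_refl b1
  have hb2 : b2 ∉ Set.Iic b1 := not_le.2 h2
  have ha2 : a2 ∉ Set.Iic b1 := not_le.2 (h2.trans h3)
  obtain ⟨hSa1, -⟩ := (hcut a1 a2 ha1 ha2).1 ⟨by omega, by tauto⟩
  obtain ⟨-, hTb2⟩ := (hcut b1 b2 hb1 hb2).1 ⟨by omega, by tauto⟩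
  obtain ⟨-, hc⟩ := (hcut a1 b2 ha1 hb2).2 ⟨hSa1, hTb2⟩
  rcases hc with ⟨-, e⟩ | ⟨e, -⟩ | ⟨e, -⟩ | ⟨e, -⟩ <;> omega

/-- two Bell pairs `{a1, a2}` and `{b1, b2}` with `a1 < b1 < b2 < a2`
cannot be extracted from the line graph `L_n`. -/
theorem bell2_not_vertexMinor_line_nested (n a1 b1 b2 a2 : ℕ) (hn : 4 ≤ n)
    (h0 : 1 ≤ a1) (h1 : a1 < b1) (h2 : b1 < b2) (h3 : b2 < a2) (h4 : a2 ≤ n) :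
    ¬ IsVertexMinor (bell2 a1 a2 b1 b2) (lineGraph n) :=
  bell2_not_vertexMinor_line_nested_general n a1 b1 b2 a2 h1 h2 h3
end
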